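/- For any L, B > 0 and ε ≤ LB/2, any map out : S → ℝ^d from a finite set S with |S| < (LB/(2ε))^d fails on some function f_i(x) = L‖x − x_i‖ from a (2ε/L)-separated family of N ≥ (LB/(2ε))^d points in the ball of radius B: there exists i such that no element of the range of out is an ε-approximate minimizer of f_i. Consequently at least d·log₂(LB/(2ε)) bits of memory are needed to represent the output. -/

import Mathlib

set_option maxHeartbeats 1000000
open Metric MeasureTheory Set ENNReal

theorem memory_lower_bound (d K : ℕ) (hd : 1 ≤ d) (L B ε : ℝ) (hL : 0 < L) (hB : 0 < B)
    (hε : 0 < ε) (hεLB : ε ≤ L * B / 2)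
    (out : Fin K → EuclideanSpace ℝ (Fin d))
    (hK : (K : ℝ) < (L * B / (2 * ε)) ^ d) :
    ∃ (N : ℕ) (x : Fin N → EuclideanSpace ℝ (Fin d)),
      (L * B / (2 * ε)) ^ d ≤ (N : ℝ) ∧
      (∀ i, ‖x i‖ ≤ B) ∧
      (∀ i j, i ≠ j → 2 * ε / L < ‖x i - x j‖) ∧
      ∃ i, ∀ k : Fin K, ε < L * ‖out k - x i‖ := by
  classical
  set r : ℝ := 2 * ε / L with hrdef
  have hr : 0 < r := by positivity
  set C : ℝ≥0∞ := volume (closedBall (0 : EuclideanSpace ℝ (Fin d)) 1) with hC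
  have hC0 : C ≠ 0 :=
    ((measure_ball_pos volume (0 : EuclideanSpace ℝ (Fin d)) one_pos).trans_le
      (measure_mono ball_subset_closedBall)).ne'
  have hCtop : C ≠ ⊤ := measure_closedBall_lt_top.ne
  have hvol : ∀ (x : EuclideanSpace ℝ (Fin d)) (s : ℝ), 0 ≤ s →
      volume (closedBall x s) = ENNReal.ofReal (s ^ d) * C := by
    intro x s hs
    have hf : Module.finrank ℝ (EuclideanSpace ℝ (Fin d)) = d := finrank_euclideanSpace_fin
    have := Measure.addHaar_closedBall' (volume : Measure (EuclideanSpace ℝ (Fin d))) x hs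
    rw [hf] at this
    exact this
  -- P: separated finsets inside the ball of radius B
  set P : Finset (EuclideanSpace ℝ (Fin d)) → Prop := fun T =>
    (↑T : Set (EuclideanSpace ℝ (Fin d))) ⊆ closedBall (0 : EuclideanSpace ℝ (Fin d)) B ∧ ∀ x ∈ T, ∀ y ∈ T, x ≠ y → r < dist x y with hP
  -- cardinality bound for separated finsets
  have hcard : ∀ T : Finset (EuclideanSpace ℝ (Fin d)), P T → (T.card : ℝ) * (r / 2) ^ d ≤ (B + r / 2) ^ d := by
    rintro T ⟨hTS, hTsep⟩
    have hdisj : (↑T : Set (EuclideanSpace ℝ (Fin d))).PairwiseDisjoint (fun x => closedBall x (r / 2)) := by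
      intro x hx y hy hxy
      exact closedBall_disjoint_closedBall (by
        have := hTsep x hx y hy hxy; linarith)
    have hsub : (⋃ x ∈ T, closedBall x (r / 2)) ⊆ closedBall (0 : EuclideanSpace ℝ (Fin d)) (B + r / 2) := by
      intro z hz
      simp only [Set.mem_iUnion] at hz
      obtain ⟨x, hx, hz⟩ := hz
      have hxB : dist x 0 ≤ B := hTS hx
      have hzx : dist z x ≤ r / 2 := hz
      have := dist_triangle z x 0
      simp only [mem_closedBall]
      linarith
    have h1 : ∑ x ∈ T, volume (closedBall x (r / 2)) ≤
        volume (closedBall (0 : EuclideanSpace ℝ (Fin d)) (B + r / 2)) := by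
      rw [← measure_biUnion_finset hdisj (fun _ _ => measurableSet_closedBall)]
      exact measure_mono hsub
    rw [Finset.sum_congr rfl (fun x _ => hvol x (r / 2) (by positivity)),
      Finset.sum_const, hvol 0 (B + r / 2) (by positivity)] at h1
    rw [nsmul_eq_mul, ← mul_assoc] at h1
    have h2 : ENNReal.ofReal ((T.card : ℝ) * (r / 2) ^ d) ≤
        ENNReal.ofReal ((B + r / 2) ^ d) := by
      rw [ENNReal.ofReal_mul (Nat.cast_nonneg _), ENNReal.ofReal_natCast]
      exact (ENNReal.mul_le_mul_iff_left hC0 hCtop).mp h1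
    exact (ENNReal.ofReal_le_ofReal_iff (by positivity)).mp h2
  have hrd : (0 : ℝ) < (r / 2) ^ d := by positivity
  set M : ℕ := Nat.floor ((B + r / 2) ^ d / (r / 2) ^ d) with hM
  have hcardM : ∀ T : Finset (EuclideanSpace ℝ (Fin d)), P T → T.card ≤ M := by
    intro T hT
    apply Nat.le_floor
    rw [le_div_iff₀ hrd]
    exact hcard T hT
  -- take a separated finset of maximal cardinality
  set A : Set ℕ := {n | ∃ T : Finset (EuclideanSpace ℝ (Fin d)), P T ∧ T.card = n} with hA
  have hA0 : 0 ∈ A := ⟨∅, ⟨by simp, by simp⟩, rfl⟩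
  have hAbdd : ∀ n ∈ A, n ≤ M := by rintro n ⟨T, hT, rfl⟩; exact hcardM T hT
  have hsup : sSup A ∈ A := Nat.sSup_mem ⟨0, hA0⟩ ⟨M, hAbdd⟩
  obtain ⟨T, hPT, hTcard⟩ := hsup
  have hTmax : ∀ T' : Finset (EuclideanSpace ℝ (Fin d)), P T' → T'.card ≤ T.card := by
    intro T' hT'
    rw [hTcard]
    exact le_csSup ⟨M, hAbdd⟩ ⟨T', hT', rfl⟩
  obtain ⟨hTS, hTsep⟩ := hPT
  -- maximality gives a covering
  have hcover : closedBall (0 : EuclideanSpace ℝ (Fin d)) B ⊆ ⋃ x ∈ T, closedBall x r := by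
    intro z hz
    by_contra hzc
    simp only [Set.mem_iUnion, mem_closedBall, not_exists, not_and, not_le] at hzc
    have hzT : z ∉ T := by
      intro h
      have h2 := hzc z h
      rw [dist_self] at h2
      linarith
    have hP' : P (insert z T) := by
      constructor
      · intro y hy
        simp only [Finset.coe_insert, Set.mem_insert_iff] at hy
        rcases hy with rfl | hy
        · exact hz
        · exact hTS hy
      · intro x hx y hy hxy
        simp only [Finset.mem_insert] at hx hy
        rcases hx with rfl | hx
        · rcases hy with rfl | hy
          · exact absurd rfl hxy
          · exact hzc y hy
        · rcases hy with rfl | hy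
          · rw [dist_comm]; exact hzc x hx
          · exact hTsep x hx y hy hxy
    have := hTmax _ hP'
    rw [Finset.card_insert_of_notMem hzT] at this
    omega
  -- volume lower bound on the cardinality
  have hlow : (B / r) ^ d ≤ (T.card : ℝ) := by
    have h1 : volume (closedBall (0 : EuclideanSpace ℝ (Fin d)) B) ≤ ∑ x ∈ T, volume (closedBall x r) :=
      (measure_mono hcover).trans (measure_biUnion_finset_le T (fun x => closedBall x r))
    rw [Finset.sum_congr rfl (fun x _ => hvol x r hr.le), Finset.sum_const,
      hvol 0 B hB.le, nsmul_eq_mul, ← mul_assoc] at h1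
    have h2 : ENNReal.ofReal (B ^ d) ≤ ENNReal.ofReal ((T.card : ℝ) * r ^ d) := by
      rw [ENNReal.ofReal_mul (Nat.cast_nonneg _), ENNReal.ofReal_natCast]
      exact (ENNReal.mul_le_mul_iff_left hC0 hCtop).mp h1
    have h3 : B ^ d ≤ (T.card : ℝ) * r ^ d :=
      (ENNReal.ofReal_le_ofReal_iff (by positivity)).mp h2
    rw [div_pow, div_le_iff₀ (by positivity)]
    linarith
  have hLBr : L * B / (2 * ε) = B / r := by
    rw [hrdef]; field_simp
  refine ⟨T.card, fun i => (T.equivFin.symm i : EuclideanSpace ℝ (Fin d)), ?_, ?_, ?_, ?_⟩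
  · rw [hLBr]; exact hlow
  · intro i
    have : ((T.equivFin.symm i : EuclideanSpace ℝ (Fin d))) ∈ closedBall (0 : EuclideanSpace ℝ (Fin d)) B :=
      hTS (T.equivFin.symm i).2
    simpa [dist_zero_right] using this
  · intro i j hij
    have hne : ((T.equivFin.symm i : EuclideanSpace ℝ (Fin d))) ≠ (T.equivFin.symm j : EuclideanSpace ℝ (Fin d)) := by
      intro h
      exact hij (T.equivFin.symm.injective (Subtype.coe_injective h))
    have := hTsep _ (T.equivFin.symm i).2 _ (T.equivFin.symm j).2 hne
    rwa [dist_eq_norm] at this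
  · by_contra hcon
    push_neg at hcon
    choose g hg using hcon
    have hginj : Function.Injective g := by
      intro i j hgij
      by_contra hij
      have hne : ((T.equivFin.symm i : EuclideanSpace ℝ (Fin d))) ≠ (T.equivFin.symm j : EuclideanSpace ℝ (Fin d)) := by
        intro h
        exact hij (T.equivFin.symm.injective (Subtype.coe_injective h))
      have hsep := hTsep _ (T.equivFin.symm i).2 _ (T.equivFin.symm j).2 hne
      have h1 : ‖out (g i) - (T.equivFin.symm i : EuclideanSpace ℝ (Fin d))‖ ≤ ε / L := by
        rw [le_div_iff₀ hL]
        linarith [hg i, mul_comm L ‖out (g i) - (T.equivFin.symm i : EuclideanSpace ℝ (Fin d))‖]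
      have h2 : ‖out (g j) - (T.equivFin.symm j : EuclideanSpace ℝ (Fin d))‖ ≤ ε / L := by
        rw [le_div_iff₀ hL]
        linarith [hg j, mul_comm L ‖out (g j) - (T.equivFin.symm j : EuclideanSpace ℝ (Fin d))‖]
      rw [hgij] at h1
      have hd2 : dist (T.equivFin.symm i : EuclideanSpace ℝ (Fin d))
          (T.equivFin.symm j : EuclideanSpace ℝ (Fin d)) ≤ ε / L + ε / L := by
        refine (dist_triangle _ (out (g j)) _).trans ?_
        have e1 : dist (T.equivFin.symm i : EuclideanSpace ℝ (Fin d)) (out (g j)) =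
            ‖out (g j) - (T.equivFin.symm i : EuclideanSpace ℝ (Fin d))‖ := by
          rw [dist_eq_norm, norm_sub_rev]
        have e2 : dist (out (g j)) (T.equivFin.symm j : EuclideanSpace ℝ (Fin d)) =
            ‖out (g j) - (T.equivFin.symm j : EuclideanSpace ℝ (Fin d))‖ := dist_eq_norm _ _
        rw [e1, e2]
        exact add_le_add h1 h2
      have hreq : r = ε / L + ε / L := by rw [hrdef]; ring
      linarith
    have hNK : T.card ≤ K := by
      have := Fintype.card_le_of_injective g hginj
      simpa using this
    have : (L * B / (2 * ε)) ^ d ≤ (K : ℝ) := by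
      rw [hLBr]
      exact hlow.trans (by exact_mod_cast hNK)
    linarith
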